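/- Theorem (check weight constraints for CSS codes): Let C_X, C_Z ⊆ 𝔽₂ⁿ be a CSS code with a set of checks of check weight at most w, where w ≥ 1, and set k_X = dim C_X and k_Z = dim C_Z. Then for every natural number m, the number of vectors x ∈ C_X^⊥ with |x| ≤ m·w is at least ∑_{j=0}^{m} binom(n − k_X, j), and the number of vectors x ∈ C_Z^⊥ with |x| ≤ m·w is at least ∑_{j=0}^{m} binom(n − k_Z, j). -/

import Mathlib

/-- Dot product of two vectors over `ZMod 2` (the standard bilinear form). -/
def dotp {i : Type*} [Fintype i] (x y : i → ZMod 2) : ZMod 2 := ∑ j, x j * y j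

/-- The dual code: the orthogonal complement of `C` with respect to the
standard bilinear form `dotp`. -/
def dualCode {i : Type*} [Fintype i] (C : Submodule (ZMod 2) (i → ZMod 2)) :
    Submodule (ZMod 2) (i → ZMod 2) where
  carrier := {u | ∀ v ∈ C, dotp u v = 0}
  add_mem' := by
    intro a b ha hb v hv
    have h1 := ha v hv
    have h2 := hb v hv
    simp only [dotp, Pi.add_apply, add_mul, Finset.sum_add_distrib] at h1 h2 ⊢
    rw [h1, h2, add_zero]
  zero_mem' := by
    intro v hv
    simp [dotp]
  smul_mem' := by
    intro c a ha v hv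
    have h1 := ha v hv
    simp only [dotp] at h1
    simp only [dotp, Pi.smul_apply, smul_eq_mul, mul_assoc, ← Finset.mul_sum]
    rw [h1, mul_zero]

section CSSaux
open Module Finset LinearMap


noncomputable def dotB (n : ℕ) : LinearMap.BilinForm (ZMod 2) (Fin n → ZMod 2) :=
  LinearMap.mk₂ (ZMod 2) (fun x y => dotp x y)
    (by intros; simp [dotp, add_mul, Finset.sum_add_distrib])
    (by intros c m nn; simp [dotp, Finset.mul_sum, mul_assoc])
    (by intros; simp [dotp, mul_add, Finset.sum_add_distrib])
    (by intros m c nn; simp [dotp, Finset.mul_sum, mul_left_comm])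

lemma dotB_apply (n : ℕ) (x y : Fin n → ZMod 2) : dotB n x y = dotp x y := rfl

lemma dotB_comm (n : ℕ) (x y : Fin n → ZMod 2) : dotB n x y = dotB n y x := by
  simp [dotB_apply, dotp, mul_comm]

lemma dotB_refl (n : ℕ) : (dotB n).IsRefl := fun x y h => by rw [dotB_comm]; exact h

lemma dotB_nondeg (n : ℕ) : (dotB n).Nondegenerate := by
  refine (LinearMap.IsRefl.nondegenerate_iff_separatingLeft (dotB_refl n)).mpr ?_
  intro x hx
  ext j
  have := hx (Pi.single j 1)
  simp only [dotB_apply, dotp, Pi.single_apply, mul_ite, mul_one, mul_zero,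
    Finset.sum_ite_eq', Finset.mem_univ, if_true] at this
  simpa using this

lemma dualCode_eq_orthogonal (n : ℕ) (C : Submodule (ZMod 2) (Fin n → ZMod 2)) :
    dualCode C = (dotB n).orthogonal C := by
  ext x
  constructor
  · intro hx v hv
    have := hx v hv
    rwa [dotB_comm, dotB_apply]
  · intro hx v hv
    have := hx v hv
    rwa [dotB_comm, dotB_apply] at this

lemma finrank_dualCode (n : ℕ) (C : Submodule (ZMod 2) (Fin n → ZMod 2)) :
    finrank (ZMod 2) (dualCode C) = n - finrank (ZMod 2) C := by
  rw [dualCode_eq_orthogonal, LinearMap.BilinForm.finrank_orthogonal (dotB_nondeg n)]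
  simp

end CSSaux


lemma hammingNorm_add_le' {ι : Type*} [Fintype ι] (x y : ι → ZMod 2) :
    hammingNorm (x + y) ≤ hammingNorm x + hammingNorm y := by
  have h1 : hammingNorm (x + y) = hammingDist (x + y) 0 := (hammingDist_zero_right _).symm
  have h2 : hammingDist (x + y) y = hammingNorm x := by
    rw [hammingDist_comm, hammingDist_eq_hammingNorm, show -y + (x + y) = x by abel]
  have h3 : hammingDist y 0 = hammingNorm y := hammingDist_zero_right _
  calc hammingNorm (x + y) = hammingDist (x + y) 0 := h1
    _ ≤ hammingDist (x + y) y + hammingDist y 0 := hammingDist_triangle _ _ _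
    _ = hammingNorm x + hammingNorm y := by rw [h2, h3]

lemma hammingNorm_sum_le {ι : Type*} [Fintype ι] (T : Finset (ι → ZMod 2)) :
    hammingNorm (∑ x ∈ T, x) ≤ ∑ x ∈ T, hammingNorm x := by
  classical
  induction T using Finset.induction with
  | empty => simp
  | insert _ _ hx ih =>
    rw [Finset.sum_insert hx, Finset.sum_insert hx]
    exact (hammingNorm_add_le' _ _).trans (Nat.add_le_add_left ih _)

lemma sum_inj_of_li {V : Type*} [AddCommGroup V] [Module (ZMod 2) V]
    (t : Finset V) (hli : LinearIndependent (ZMod 2) ((↑) : (↑t : Set V) → V))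
    (T1 T2 : Finset V) (h1 : T1 ⊆ t) (h2 : T2 ⊆ t)
    (hs : ∑ x ∈ T1, x = ∑ x ∈ T2, x) : T1 = T2 := by
  classical
  have hli' : LinearIndependent (ZMod 2) (fun x : {x // x ∈ t} => (x : V)) := hli
  rw [linearIndependent_iff'] at hli'
  set g : {x // x ∈ t} → ZMod 2 :=
    fun i => (if (i : V) ∈ T1 then 1 else 0) + (if (i : V) ∈ T2 then 1 else 0) with hg
  have hsum : ∑ i ∈ Finset.univ, g i • (i : V) = 0 := by
    have attach_eq : ∑ i ∈ Finset.univ, g i • (i : V) =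
        ∑ x ∈ t, ((if x ∈ T1 then (1 : ZMod 2) else 0) + (if x ∈ T2 then 1 else 0)) • x := by
      rw [← Finset.sum_attach t
        (fun x => ((if x ∈ T1 then (1 : ZMod 2) else 0) + (if x ∈ T2 then 1 else 0)) • x)]
      rfl
    rw [attach_eq]
    have split : ∀ (T : Finset V), T ⊆ t →
        ∑ x ∈ t, (if x ∈ T then (1 : ZMod 2) else 0) • x = ∑ x ∈ T, x := by
      intro T hT
      rw [show (∑ x ∈ t, (if x ∈ T then (1 : ZMod 2) else 0) • x)
          = ∑ x ∈ t, (if x ∈ T then x else 0) from by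
        apply Finset.sum_congr rfl; intro x _; split <;> simp]
      rw [← Finset.sum_filter, Finset.filter_mem_eq_inter, Finset.inter_eq_right.mpr hT]
    simp only [add_smul, Finset.sum_add_distrib, split T1 h1, split T2 h2, hs]
    rw [← two_smul (ZMod 2)]
    simp [show (2 : ZMod 2) = 0 from rfl]
  have hzero := hli' Finset.univ g hsum
  ext x
  constructor
  · intro hx
    have hxt := h1 hx
    have := hzero ⟨x, hxt⟩ (Finset.mem_univ _)
    simp only [hg, hx, if_true] at this
    by_contra hx2
    simp [hx2] at this
  · intro hx
    have hxt := h2 hx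
    have := hzero ⟨x, hxt⟩ (Finset.mem_univ _)
    simp only [hg, hx, if_true] at this
    by_contra hx2
    simp [hx2] at this

open Module Finset in
lemma key_count (n w m : ℕ) (hw : 1 ≤ w) (D : Submodule (ZMod 2) (Fin n → ZMod 2))
    (S : Finset (Fin n → ZMod 2))
    (hS : Submodule.span (ZMod 2) (↑S : Set (Fin n → ZMod 2)) = D)
    (hwS : ∀ s ∈ S, hammingNorm s ≤ w) :
    ∑ j ∈ Finset.range (m + 1), (Module.finrank (ZMod 2) D).choose j ≤
      Set.ncard {x : Fin n → ZMod 2 | x ∈ D ∧ hammingNorm x ≤ m * w} := by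
  classical
  obtain ⟨b, hbS, hspan, hli⟩ :=
    exists_linearIndependent (ZMod 2) (↑S : Set (Fin n → ZMod 2))
  have hbfin : b.Finite := S.finite_toSet.subset hbS
  obtain ⟨t, rfl⟩ : ∃ t : Finset (Fin n → ZMod 2), ↑t = b :=
    ⟨hbfin.toFinset, hbfin.coe_toFinset⟩
  -- dimension
  have hd : Module.finrank (ZMod 2) D = t.card := by
    rw [← hS, ← hspan]
    exact finrank_span_finset_eq_card hli
  -- elements of t are in D
  have htD : ∀ x ∈ t, x ∈ D := by
    intro x hx
    rw [← hS]
    exact Submodule.subset_span (hbS hx)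
  -- the target finset
  set T0 : Finset (Fin n → ZMod 2) :=
    Finset.univ.filter (fun x => x ∈ D ∧ hammingNorm x ≤ m * w) with hT0
  have hset : {x : Fin n → ZMod 2 | x ∈ D ∧ hammingNorm x ≤ m * w} = ↑T0 := by
    ext x; simp [hT0]
  rw [hset, Set.ncard_coe_finset]
  -- the source finset
  set P : Finset (Finset (Fin n → ZMod 2)) :=
    t.powerset.filter (fun T => T.card ≤ m) with hP
  have hPcard : P.card = ∑ j ∈ Finset.range (m + 1), t.card.choose j := by
    have : P = (Finset.range (m + 1)).biUnion (fun j => t.powersetCard j) := by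
      ext T
      simp only [hP, Finset.mem_filter, Finset.mem_powerset, Finset.mem_biUnion,
        Finset.mem_range, Finset.mem_powersetCard, Nat.lt_succ_iff]
      constructor
      · rintro ⟨h1, h2⟩; exact ⟨T.card, h2, h1, rfl⟩
      · rintro ⟨j, hj, h1, rfl⟩; exact ⟨h1, hj⟩
    rw [this, Finset.card_biUnion]
    · exact Finset.sum_congr rfl (fun j _ => Finset.card_powersetCard j t)
    · intro i _ j _ hij
      simp only [Finset.disjoint_left, Finset.mem_powersetCard]
      rintro T ⟨-, h1⟩ ⟨-, h2⟩
      exact hij (h1.symm.trans h2)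
  rw [hd, ← hPcard]
  -- injection
  apply Finset.card_le_card_of_injOn (fun T => ∑ x ∈ T, x)
  · intro T hT
    simp only [hP, Finset.mem_coe, Finset.mem_filter, Finset.mem_powerset] at hT
    obtain ⟨hTt, hTm⟩ := hT
    simp only [hT0, Finset.mem_coe, Finset.mem_filter, Finset.mem_univ, true_and]
    constructor
    · exact Submodule.sum_mem D (fun x hx => htD x (hTt hx))
    · calc hammingNorm (∑ x ∈ T, x) ≤ ∑ x ∈ T, hammingNorm x := hammingNorm_sum_le T
        _ ≤ ∑ _x ∈ T, w := Finset.sum_le_sum (fun x hx => hwS x (hbS (hTt hx)))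
        _ = T.card * w := by rw [Finset.sum_const, smul_eq_mul]
        _ ≤ m * w := Nat.mul_le_mul_right w hTm
  · intro T1 hT1 T2 hT2 hsum
    simp only [hP, Finset.coe_filter, Set.mem_setOf_eq, Finset.mem_powerset] at hT1 hT2
    exact sum_inj_of_li t hli T1 T2 hT1.1 hT2.1 hsum


/-- **Theorem (check weight constraints for CSS codes).**
Let `(CX, CZ)` be a CSS code with a set of checks of check weight at most
`w ≥ 1`, and set `k_X = dim CX`, `k_Z = dim CZ`.  Then for every `m`, the
number of vectors of `CX^⊥` of Hamming weight at most `m·w` is at least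
`∑_{j=0}^{m} C(n - k_X, j)`, and likewise for `CZ^⊥`. -/
theorem css_check_weight_constraints (n w : ℕ) (hw : 1 ≤ w)
    (CX CZ : Submodule (ZMod 2) (Fin n → ZMod 2))
    (hCSS : dualCode CX ≤ CZ)
    (SX SZ : Finset (Fin n → ZMod 2))
    (hSX : Submodule.span (ZMod 2) (↑SX : Set (Fin n → ZMod 2)) = dualCode CX)
    (hSZ : Submodule.span (ZMod 2) (↑SZ : Set (Fin n → ZMod 2)) = dualCode CZ)
    (hwX : ∀ s ∈ SX, hammingNorm s ≤ w)
    (hwZ : ∀ s ∈ SZ, hammingNorm s ≤ w)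
    (m : ℕ) :
    (∑ j ∈ Finset.range (m + 1),
        (n - Module.finrank (ZMod 2) CX).choose j) ≤
      Set.ncard {x : Fin n → ZMod 2 | x ∈ dualCode CX ∧ hammingNorm x ≤ m * w} ∧
    (∑ j ∈ Finset.range (m + 1),
        (n - Module.finrank (ZMod 2) CZ).choose j) ≤
      Set.ncard {x : Fin n → ZMod 2 | x ∈ dualCode CZ ∧ hammingNorm x ≤ m * w} := by
  have h1 := key_count n w m hw (dualCode CX) SX hSX hwX
  have h2 := key_count n w m hw (dualCode CZ) SZ hSZ hwZ
  rw [finrank_dualCode] at h1 h2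
  exact ⟨h1, h2⟩
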